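/- arXiv:2111.10550 — 2 statements merged into one kernel-verified Lean document; each statement's English description precedes it below -/
import Mathlib

section
/- Let K > 0, T_c > 1, and a > 0 be real numbers (where a = cγK² combines the constant c = 0.7671·β_l, the transmit SNR γ, and the number of RIS elements K), and define f : (0, ∞) → ℝ by f(B) = (1 − (1 + K/B)/T_c) · (log(a/B) / log 2). Then for every B > 0, the derivative f′(B) = 0 if and only if K·(1 + log a) − K·log B = B·(T_c − 1), where log denotes the natural logarithm. -/
open Real

/-- The paper's high-SNR rate approximation `R̄₁(B)`, with `a = cγK²`. -/
noncomputable def rateApprox (K Tc a B : ℝ) : ℝ :=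
  (1 - (1 + K / B) / Tc) * (log (a / B) / log 2)

theorem hasDerivAt_const_div {c x : ℝ} (hx : x ≠ 0) :
    HasDerivAt (fun y => c / y) (-c / x ^ 2) x := by
  simpa only [div_eq_mul_inv, mul_neg, neg_mul] using (hasDerivAt_inv hx).const_mul c

theorem hasDerivAt_rateApprox {K Tc a B : ℝ} (hTc : Tc ≠ 0) (ha : a ≠ 0) (hB : B ≠ 0) :
    HasDerivAt (rateApprox K Tc a)
      ((K * (1 + log a) - K * log B - B * (Tc - 1)) / (B ^ 2 * Tc * log 2)) B := by
  have hfactor : HasDerivAt (fun x => 1 - (1 + K / x) / Tc) (K / (B ^ 2 * Tc)) B :=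
    (((hasDerivAt_const_div hB).const_add 1).div_const Tc).const_sub 1
      |>.congr_deriv (by field_simp)
  have hlog : HasDerivAt (fun x => log (a / x) / log 2) (-1 / (B * log 2)) B :=
    ((hasDerivAt_const_div hB).log (div_ne_zero ha hB)).div_const (log 2)
      |>.congr_deriv (by field_simp)
  refine (hfactor.mul hlog).congr_deriv ?_
  rw [log_div ha hB]
  field_simp
  ring

theorem stmt11_general (K Tc a : ℝ) (hTc : 1 < Tc) (ha : 0 < a) :
    ∀ B : ℝ, 0 < B →
      (deriv (fun B : ℝ => (1 - (1 + K / B) / Tc) * (Real.log (a / B) / Real.log 2)) B = 0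
        ↔ K * (1 + Real.log a) - K * Real.log B = B * (Tc - 1)) := by
  intro B hB
  have hTc₀ : 0 < Tc := zero_lt_one.trans hTc
  have hden : B ^ 2 * Tc * log 2 ≠ 0 := by positivity
  change deriv (rateApprox K Tc a) B = 0 ↔ _
  rw [(hasDerivAt_rateApprox hTc₀.ne' ha.ne' hB.ne').deriv, div_eq_zero_iff, or_iff_left hden,
    sub_eq_zero]

/-- Stationary-point equation for the high-SNR rate approximation
`f(B) = (1 - (1 + K/B)/T_c) · log₂(a/B)`: for `B > 0`, `f'(B) = 0` iff
`K (1 + log a) - K log B = B (T_c - 1)`. -/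
theorem stmt11 (K Tc a : ℝ) (hK : 0 < K) (hTc : 1 < Tc) (ha : 0 < a) :
    ∀ B : ℝ, 0 < B →
      (deriv (fun B : ℝ => (1 - (1 + K / B) / Tc) * (Real.log (a / B) / Real.log 2)) B = 0
        ↔ K * (1 + Real.log a) - K * Real.log B = B * (Tc - 1)) :=
  stmt11_general K Tc a hTc ha
end

section
/- Let K > 0, T_c > 1, c > 0 be real numbers, and let 0 < γ₁ < γ₂. Suppose B₁ > 0 and B₂ > 0 satisfy the stationarity equations K·(1 + log(c γ₁ K²)) − K·log B₁ = B₁·(T_c − 1) and K·(1 + log(c γ₂ K²)) − K·log B₂ = B₂·(T_c − 1), where log is the natural logarithm. Then B₁ < B₂. -/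
open Real

/-- `x ↦ a log x + b x` is nondecreasing on `(0, ∞)` for `a, b ≥ 0`, so it can only take a smaller
value at `x` than at some `y > 0` when `x < y`. -/
theorem lt_of_mul_log_add_mul_lt {a b x y : ℝ} (ha : 0 ≤ a) (hb : 0 ≤ b) (hy : 0 < y)
    (h : a * log x + x * b < a * log y + y * b) : x < y := by
  by_contra! hyx
  have : a * log y + y * b ≤ a * log x + x * b := by gcongr
  exact h.not_ge this

theorem stmt13_general (K Tc c γ₁ γ₂ B₁ B₂ : ℝ) (hK : 0 < K) (hTc : 1 < Tc) (hc : 0 < c)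
    (hγ₁ : 0 < γ₁) (hγ : γ₁ < γ₂) (hB₂ : 0 < B₂)
    (h1 : K * (1 + Real.log (c * γ₁ * K ^ 2)) - K * Real.log B₁ = B₁ * (Tc - 1))
    (h2 : K * (1 + Real.log (c * γ₂ * K ^ 2)) - K * Real.log B₂ = B₂ * (Tc - 1)) :
    B₁ < B₂ := by
  have hlog : log (c * γ₁ * K ^ 2) < log (c * γ₂ * K ^ 2) :=
    log_lt_log (by positivity) (by gcongr)
  refine lt_of_mul_log_add_mul_lt hK.le (sub_nonneg.2 hTc.le) hB₂ ?_
  linarith [mul_lt_mul_of_pos_left hlog hK]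

/-- The optimal RIS group size is monotonically increasing in the transmit SNR `γ`:
if `B₁, B₂` solve the stationarity equation for SNRs `γ₁ < γ₂` respectively, then
`B₁ < B₂`. -/
theorem stmt13 (K Tc c γ₁ γ₂ B₁ B₂ : ℝ) (hK : 0 < K) (hTc : 1 < Tc) (hc : 0 < c)
    (hγ₁ : 0 < γ₁) (hγ : γ₁ < γ₂) (hB₁ : 0 < B₁) (hB₂ : 0 < B₂)
    (h1 : K * (1 + Real.log (c * γ₁ * K ^ 2)) - K * Real.log B₁ = B₁ * (Tc - 1))
    (h2 : K * (1 + Real.log (c * γ₂ * K ^ 2)) - K * Real.log B₂ = B₂ * (Tc - 1)) :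
    B₁ < B₂ :=
  stmt13_general K Tc c γ₁ γ₂ B₁ B₂ hK hTc hc hγ₁ hγ hB₂ h1 h2
end
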